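/- Let (M, ≤, u) be a scaled partially ordered abelian semigroup and let K be a nonempty compact convex subset of the state space S(M, ≤, u) (with the topology of pointwise convergence). Suppose that for all a, b ∈ M, if s(a) < s(b) for every s ∈ K, then s(a) < s(b) for every s ∈ S(M, ≤, u). Then K = S(M, ≤, u). -/

import Mathlib

/-!
Suppose a state `t` lies outside `K`. Hahn–Banach strictly separates `t` from `K` by a continuous
functional, which on the product space `M → ℝ` only sees finitely many coordinates, and using
`s u = 1` we may take it to separate at level `0`. States are bounded by the order unit, so
rounding a large multiple of its coefficients gives an integer combination `∑ pᵢ s(xᵢ)`, still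
positive on `K` and negative at `t`. Sorting the coefficients by sign writes it as `s b - s a`,
contradicting the hypothesis on `K`.
-/

/-- A state on a scaled partially ordered abelian semigroup `(M, ≤, u)`. -/
def IsState {M : Type*} [AddCommMonoid M] [PartialOrder M] (u : M) (s : M → ℝ) : Prop :=
  s 0 = 0 ∧ (∀ x y : M, s (x + y) = s x + s y) ∧
    (∀ x y : M, x ≤ y → s x ≤ s y) ∧ s u = 1

/-- The state space `S(M, ≤, u)`, a subset of `M → ℝ` with the topology of
pointwise convergence. -/
def StateSpace (M : Type*) [AddCommMonoid M] [PartialOrder M] (u : M) : Set (M → ℝ) :=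
  {s | IsState u s}

open Finset

theorem ContinuousLinearMap.exists_finsupp_eq_sum_mul_apply {ι : Type*}
    (f : (ι → ℝ) →L[ℝ] ℝ) : ∃ c : ι →₀ ℝ, ∀ x, f x = ∑ i ∈ c.support, c i * x i := by
  have hspan : f.toLinearMap ∈ Submodule.span ℝ (Set.range fun i ↦ LinearMap.proj (R := ℝ) i) :=
    (LinearMap.mem_span_iff_continuous _).2 f.continuous
  obtain ⟨c, hc⟩ := Finsupp.mem_span_range_iff_exists_finsupp.1 hspan
  refine ⟨c, fun x ↦ ?_⟩
  rw [← f.coe_coe, ← hc, LinearMap.finsupp_sum_apply]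
  rfl

theorem exists_int_combination_near_smul {ι : Type*} (F : Finset ι) (c N : ι → ℝ) {δ : ℝ}
    (hδ : 0 < δ) : ∃ d : ℝ, 0 < d ∧ ∃ p : ι → ℤ, ∀ x : ι → ℝ, (∀ i ∈ F, |x i| ≤ N i) →
      |∑ i ∈ F, p i * x i - d * ∑ i ∈ F, c i * x i| < d * δ := by
  set d := (∑ i ∈ F, |N i| + 1) / δ
  have hdδ : d * δ = ∑ i ∈ F, |N i| + 1 := div_mul_cancel₀ _ hδ.ne'
  refine ⟨d, by positivity, fun i ↦ round (d * c i), fun x hx ↦ ?_⟩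
  calc |∑ i ∈ F, round (d * c i) * x i - d * ∑ i ∈ F, c i * x i|
      = |∑ i ∈ F, (round (d * c i) - d * c i) * x i| := by
        rw [mul_sum, ← sum_sub_distrib]; simp only [sub_mul, mul_assoc]
    _ ≤ ∑ i ∈ F, |(round (d * c i) - d * c i) * x i| := abs_sum_le_sum_abs _ _
    _ ≤ ∑ i ∈ F, |N i| := sum_le_sum fun i hi ↦ by
        rw [abs_mul, abs_sub_comm]
        have := abs_sub_round (d * c i)
        nlinarith [abs_nonneg (x i), (hx i hi).trans (le_abs_self (N i))]
    _ < d * δ := by linarith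

theorem exists_sub_eq_sum_zsmul {M G : Type*} [AddCommMonoid M] [AddCommGroup G]
    (F : Finset M) (p : M → ℤ) :
    ∃ a b : M, ∀ φ : M →+ G, φ b - φ a = ∑ i ∈ F, p i • φ i := by
  refine ⟨∑ i ∈ F, (-p i).toNat • i, ∑ i ∈ F, (p i).toNat • i, fun φ ↦ ?_⟩
  simp only [map_sum, map_nsmul, ← sum_sub_distrib, ← natCast_zsmul, ← sub_smul,
    Int.toNat_sub_toNat_neg]

section State

variable {M : Type*} [AddCommMonoid M] [PartialOrder M] {u : M} {s : M → ℝ}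

def IsState.toAddMonoidHom (hs : IsState u s) : M →+ ℝ where
  toFun := s
  map_zero' := hs.1
  map_add' := hs.2.1

@[simp]
theorem IsState.toAddMonoidHom_apply (hs : IsState u s) (x : M) : hs.toAddMonoidHom x = s x :=
  rfl

theorem IsState.nonneg (hpos : ∀ a : M, 0 ≤ a) (hs : IsState u s) (x : M) : 0 ≤ s x :=
  hs.1 ▸ hs.2.2.1 0 x (hpos x)

theorem IsState.le_of_le_nsmul (hs : IsState u s) {x : M} {n : ℕ} (h : x ≤ n • u) :
    s x ≤ n := by
  have hnu : s (n • u) = n := by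
    rw [← hs.toAddMonoidHom_apply, map_nsmul, hs.toAddMonoidHom_apply, hs.2.2.2, nsmul_one]
  exact hnu ▸ hs.2.2.1 x _ h

theorem exists_separating_pair_of_notMem (hpos : ∀ a : M, 0 ≤ a)
    (hu : ∀ x : M, ∃ n : ℕ, x ≤ n • u) {K : Set (M → ℝ)} (hKsub : K ⊆ StateSpace M u)
    (hKcomp : IsCompact K) (hKconv : Convex ℝ K) {t : M → ℝ} (ht : t ∈ StateSpace M u)
    (htK : t ∉ K) : ∃ a b : M, (∀ s ∈ K, s a < s b) ∧ t b < t a := by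
  obtain ⟨f, α, hft, hfK⟩ := geometric_hahn_banach_point_closed hKconv hKcomp.isClosed htK
  obtain ⟨β, δ, hα, hft, hδ⟩ : ∃ β δ : ℝ, α = β + δ ∧ f t = β - δ ∧ 0 < δ :=
    ⟨(α + f t) / 2, (α - f t) / 2, by ring, by ring, by linarith⟩
  -- Since every state takes the value `1` at `u`, this turns the affine separation into a linear one.
  set g := f - β • ContinuousLinearMap.proj (R := ℝ) (φ := fun _ : M ↦ ℝ) u
  have hg : ∀ s ∈ StateSpace M u, g s = f s - β := fun s hs ↦ by simp [g, hs.2.2.2]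
  obtain ⟨c, hc⟩ := g.exists_finsupp_eq_sum_mul_apply
  choose N hN using hu
  obtain ⟨d, hd, p, hp⟩ := exists_int_combination_near_smul c.support c (fun i ↦ N i) hδ
  obtain ⟨a, b, hab⟩ := exists_sub_eq_sum_zsmul (G := ℝ) c.support p
  have hstate : ∀ s, IsState u s → |(s b - s a) - d * (f s - β)| < d * δ := fun s hs ↦ by
    have := hab hs.toAddMonoidHom
    simp only [IsState.toAddMonoidHom_apply, zsmul_eq_mul] at this
    rw [this, ← hg s hs, hc]
    refine hp s fun i _ ↦ ?_
    rw [abs_of_nonneg (hs.nonneg hpos i)]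
    exact hs.le_of_le_nsmul (hN i)
  refine ⟨a, b, fun s hs ↦ ?_, ?_⟩
  · have hfs : 0 < d * (f s - α) := mul_pos hd (sub_pos.2 (hfK s hs))
    have h := (abs_lt.1 (hstate s (hKsub hs))).1
    linarith [show d * (f s - β) - d * δ = d * (f s - α) by rw [hα]; ring]
  · have h := (abs_lt.1 (hstate t ht)).2
    linarith [show d * (f t - β) + d * δ = 0 by rw [hft]; ring]

end State

theorem compact_convex_subset_eq_stateSpace_general {M : Type*} [AddCommMonoid M] [PartialOrder M]
    (hpos : ∀ a : M, 0 ≤ a)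
    (u : M) (hu : ∀ x : M, ∃ n : ℕ, x ≤ n • u)
    (K : Set (M → ℝ)) (hKsub : K ⊆ StateSpace M u)
    (hKcomp : IsCompact K) (hKconv : Convex ℝ K)
    (hsep : ∀ a b : M, (∀ s ∈ K, s a < s b) → ∀ s ∈ StateSpace M u, s a < s b) :
    K = StateSpace M u := by
  refine hKsub.antisymm fun t ht ↦ by_contra fun htK ↦ ?_
  obtain ⟨a, b, hK, hba⟩ :=
    exists_separating_pair_of_notMem hpos hu hKsub hKcomp hKconv ht htK
  exact (hsep a b hK t ht).not_gt hba

/-- Let `(M, ≤, u)` be a scaled partially ordered abelian semigroup and `K` a nonempty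
compact convex subset of `S(M, ≤, u)`. Suppose that for all `a b ∈ M`, if `s a < s b`
for every `s ∈ K` then `s a < s b` for every `s ∈ S(M, ≤, u)`. Then `K = S(M, ≤, u)`. -/
theorem compact_convex_subset_eq_stateSpace {M : Type*} [AddCommMonoid M] [PartialOrder M]
    (hpos : ∀ a : M, 0 ≤ a)
    (hadd : ∀ a b c : M, a ≤ b → a + c ≤ b + c)
    (u : M) (hu : ∀ x : M, ∃ n : ℕ, x ≤ n • u)
    (K : Set (M → ℝ)) (hKsub : K ⊆ StateSpace M u)
    (hKne : K.Nonempty) (hKcomp : IsCompact K) (hKconv : Convex ℝ K)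
    (hsep : ∀ a b : M, (∀ s ∈ K, s a < s b) → ∀ s ∈ StateSpace M u, s a < s b) :
    K = StateSpace M u :=
  compact_convex_subset_eq_stateSpace_general hpos u hu K hKsub hKcomp hKconv hsep
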